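/- arXiv:2108.04956 — 3 statements merged into one kernel-verified Lean document; each statement's English description precedes it below -/
import Mathlib

section
/- Suppose the initial data z_1(0),...,z_N(0) are all nonzero, and suppose Z ∈ ℂ satisfies the N algebraic constraints Z = r_n^{-1} · ∑_{m} c_{n,m} ∏_{ℓ=1}^{N} r_ℓ^{m_ℓ} for every n ∈ {1,...,N}, where r_ℓ := z_ℓ(0)/z_N(0) (so r_N = 1) and the sum runs over all multi-indices m of degree M. Then the sequence defined by z_n(s) := z_n(0) · [z_N(0)]^{M^s − 1} · Z^{e(s)} for n = 1,...,N and s ∈ ℕ satisfies the system of first-order difference equations z_n(s+1) = ∑_{m} c_{n,m} ∏_{ℓ=1}^{N} [z_ℓ(s)]^{m_ℓ} for all n ∈ {1,...,N} and all s ∈ ℕ. -/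
/-!
Separation of variables: try `z ℓ s = t s * r ℓ` with a common scalar factor `t s`. Since the
right-hand sides `Pₙ` are homogeneous of degree `M`, the system becomes
`r n * t (s + 1) = t s ^ M * Pₙ(r)`, and the constraints `Pₙ(r) = r n * Z` reduce it to the
scalar recursion `t (s + 1) = Z * t s ^ M`, solved by `t s = z0 (N-1) ^ M ^ s * Z ^ e(s)`.
-/

open Finset

section Homogeneous

variable {R : Type*} [CommSemiring R] {N M : ℕ}

theorem sum_antidiagonalTuple_mul_prod_mul_pow (a : (Fin N → ℕ) → R) (t : R) (x : Fin N → R) :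
    ∑ m ∈ Nat.antidiagonalTuple N M, a m * ∏ ℓ, (t * x ℓ) ^ m ℓ =
      t ^ M * ∑ m ∈ Nat.antidiagonalTuple N M, a m * ∏ ℓ, x ℓ ^ m ℓ := by
  rw [mul_sum]
  refine sum_congr rfl fun m hm => ?_
  have hdeg : ∑ ℓ, m ℓ = M := Nat.mem_antidiagonalTuple.mp hm
  simp only [mul_pow, prod_mul_distrib, prod_pow_eq_pow_sum, hdeg]
  ring

theorem separable_solution (c : Fin N → (Fin N → ℕ) → R) (r : Fin N → R) (Z : R)
    (hr : ∀ n, ∑ m ∈ Nat.antidiagonalTuple N M, c n m * ∏ ℓ, r ℓ ^ m ℓ = r n * Z)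
    (t : ℕ → R) (ht : ∀ s, t (s + 1) = Z * t s ^ M) (n : Fin N) (s : ℕ) :
    r n * t (s + 1) =
      ∑ m ∈ Nat.antidiagonalTuple N M, c n m * ∏ ℓ, (t s * r ℓ) ^ m ℓ := by
  rw [sum_antidiagonalTuple_mul_prod_mul_pow, hr, ht]
  ring

end Homogeneous

theorem pow_pow_mul_pow_geom_sum_succ {R : Type*} [CommMonoid R] (w Z : R) (M s : ℕ) :
    w ^ M ^ (s + 1) * Z ^ (∑ k ∈ range (s + 1), M ^ k) =
      Z * (w ^ M ^ s * Z ^ (∑ k ∈ range s, M ^ k)) ^ M := by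
  rw [geom_sum_succ, mul_pow, ← pow_mul, ← pow_mul, pow_succ, pow_succ]
  ac_rfl

/-- Fix `N ≥ 1`, `M ≥ 2`, coefficients `c n m` (for `n : Fin N` and
multi-indices `m : Fin N → ℕ` of degree `M`), and nonzero initial data `z0`.
If `Z` satisfies the `N` algebraic constraints
`Z = rₙ⁻¹ ∑ₘ c n m ∏ₗ rₗ^{mₗ}` with `rₗ = z0 ℓ / z0 (N-1)`, then
`z n s = z0 n * (z0 (N-1))^(M^s - 1) * Z^(e s)` (with `e s = ∑_{k<s} M^k`) solves the
system `z n (s+1) = ∑ₘ c n m ∏ₗ (z ℓ s)^{mₗ}`. -/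
theorem solvable_system_homogeneous_polynomial
    (N M : ℕ) (hN : 1 ≤ N) (hM : 2 ≤ M)
    (c : Fin N → (Fin N → ℕ) → ℂ)
    (z0 : Fin N → ℂ) (hz0 : ∀ n, z0 n ≠ 0)
    (Z : ℂ)
    (r : Fin N → ℂ) (hr : ∀ ℓ, r ℓ = z0 ℓ / z0 ⟨N - 1, by omega⟩)
    (hconstraint : ∀ n : Fin N,
      Z = (r n)⁻¹ *
        ∑ m ∈ Finset.Nat.antidiagonalTuple N M, c n m * ∏ ℓ, (r ℓ) ^ (m ℓ))
    (z : Fin N → ℕ → ℂ)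
    (hz : ∀ n s, z n s =
      z0 n * (z0 ⟨N - 1, by omega⟩) ^ (M ^ s - 1) *
        Z ^ (∑ k ∈ Finset.range s, M ^ k)) :
    ∀ (n : Fin N) (s : ℕ),
      z n (s + 1) =
        ∑ m ∈ Finset.Nat.antidiagonalTuple N M, c n m * ∏ ℓ, (z ℓ s) ^ (m ℓ) := by
  set w := z0 ⟨N - 1, by omega⟩
  have hw : w ≠ 0 := hz0 _
  set t : ℕ → ℂ := fun s => w ^ M ^ s * Z ^ (∑ k ∈ range s, M ^ k)
  have hzt : ∀ ℓ s, z ℓ s = t s * r ℓ := fun ℓ s => by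
    have hMs : M ^ s ≠ 0 := pow_ne_zero _ (by omega)
    simp only [hz, hr, t]
    rw [← mul_pow_sub_one hMs w]
    field_simp
  have hrZ : ∀ n, ∑ m ∈ Nat.antidiagonalTuple N M, c n m * ∏ ℓ, r ℓ ^ m ℓ = r n * Z := by
    intro n
    have hrn : r n ≠ 0 := by rw [hr]; exact div_ne_zero (hz0 n) hw
    rw [hconstraint n, mul_inv_cancel_left₀ hrn]
  intro n s
  simp only [hzt]
  rw [mul_comm]
  exact separable_solution c r Z hrZ t (pow_pow_mul_pow_geom_sum_succ w Z M) n s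
end

section
/- Suppose Z ∈ ℂ and the initial data z_1(0),...,z_N(0) ∈ ℂ (not required to be nonzero) satisfy the N product-form constraints z_n(0) · [z_N(0)]^{M−1} · Z = ∑_{m} c_{n,m} ∏_{ℓ=1}^{N} [z_ℓ(0)]^{m_ℓ} for every n ∈ {1,...,N}, where the sum runs over all multi-indices m of degree M. Then z_n(s) := z_n(0) · [z_N(0)]^{M^s − 1} · Z^{e(s)} satisfies z_n(s+1) = ∑_{m} c_{n,m} ∏_{ℓ=1}^{N} [z_ℓ(s)]^{m_ℓ} for all n ∈ {1,...,N} and all s ∈ ℕ. -/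
/-!
Every `z ℓ s` is the initial value `z0 ℓ` times one common scalar `a s`, so by homogeneity of
degree `M` the right-hand side at step `s` is `a s ^ M` times its value at the initial data,
which the constraint rewrites as `z0 n * A ^ (M - 1) * Z` with `A = z0 (N - 1)`. It remains
that `a (s + 1) = A ^ (M - 1) * Z * a s ^ M`, i.e. the exponent recursions
`M ^ (s + 1) - 1 = (M ^ s - 1) * M + (M - 1)` and `e (s + 1) = M * e s + 1`.
-/

open Finset

theorem prod_mul_pow_of_mem_antidiagonalTuple {R : Type*} [CommMonoid R] {k d : ℕ}
    {m : Fin k → ℕ} (hm : m ∈ Nat.antidiagonalTuple k d) (x : Fin k → R) (a : R) :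
    ∏ ℓ, (x ℓ * a) ^ m ℓ = (∏ ℓ, x ℓ ^ m ℓ) * a ^ d := by
  rw [← Nat.mem_antidiagonalTuple.mp hm, ← prod_pow_eq_pow_sum, ← prod_mul_distrib]
  simp only [mul_pow]

theorem sum_antidiagonalTuple_mul_prod_pow_mul {R : Type*} [CommSemiring R] {k d : ℕ}
    (c : (Fin k → ℕ) → R) (x : Fin k → R) (a : R) :
    ∑ m ∈ Nat.antidiagonalTuple k d, c m * ∏ ℓ, (x ℓ * a) ^ m ℓ =
      a ^ d * ∑ m ∈ Nat.antidiagonalTuple k d, c m * ∏ ℓ, x ℓ ^ m ℓ := by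
  rw [mul_sum]
  refine sum_congr rfl fun m hm => ?_
  rw [prod_mul_pow_of_mem_antidiagonalTuple hm]
  ring

theorem Nat.pow_succ_sub_one_eq (M s : ℕ) :
    M ^ (s + 1) - 1 = (M ^ s - 1) * M + (M - 1) := by
  rcases Nat.eq_zero_or_pos M with rfl | hM
  · simp
  · have h : 1 ≤ M ^ s := Nat.one_le_pow _ _ hM
    rw [pow_succ, Nat.sub_mul, one_mul]
    have : M ≤ M ^ s * M := Nat.le_mul_of_pos_left M h
    omega

theorem pow_pow_succ_sub_one_mul_pow_geom_sum {R : Type*} [CommMonoid R] (A Z : R) (M s : ℕ) :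
    A ^ (M ^ (s + 1) - 1) * Z ^ (∑ k ∈ range (s + 1), M ^ k) =
      A ^ (M - 1) * Z * (A ^ (M ^ s - 1) * Z ^ (∑ k ∈ range s, M ^ k)) ^ M := by
  rw [Nat.pow_succ_sub_one_eq, geom_sum_succ, pow_add, pow_mul, pow_add, pow_mul', mul_pow]
  simp only [pow_one]
  ac_rfl

/-- Fix `N ≥ 1`, `M ≥ 2`, coefficients `c n m` and initial data `z0`
(not required to be nonzero). If `Z` satisfies the `N` product-form constraints
`z0 n * (z0 (N-1))^(M-1) * Z = ∑ₘ c n m ∏ₗ (z0 ℓ)^{mₗ}`, then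
`z n s = z0 n * (z0 (N-1))^(M^s - 1) * Z^(e s)` (with `e s = ∑_{k<s} M^k`) solves the
system `z n (s+1) = ∑ₘ c n m ∏ₗ (z ℓ s)^{mₗ}`. -/
theorem solvable_system_homogeneous_polynomial_product_form
    (N M : ℕ) (hN : 1 ≤ N)
    (c : Fin N → (Fin N → ℕ) → ℂ)
    (z0 : Fin N → ℂ)
    (Z : ℂ)
    (hconstraint : ∀ n : Fin N,
      z0 n * (z0 ⟨N - 1, by omega⟩) ^ (M - 1) * Z =
        ∑ m ∈ Finset.Nat.antidiagonalTuple N M, c n m * ∏ ℓ, (z0 ℓ) ^ (m ℓ))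
    (z : Fin N → ℕ → ℂ)
    (hz : ∀ n s, z n s =
      z0 n * (z0 ⟨N - 1, by omega⟩) ^ (M ^ s - 1) *
        Z ^ (∑ k ∈ Finset.range s, M ^ k)) :
    ∀ (n : Fin N) (s : ℕ),
      z n (s + 1) =
        ∑ m ∈ Finset.Nat.antidiagonalTuple N M, c n m * ∏ ℓ, (z ℓ s) ^ (m ℓ) := by
  intro n s
  set A := z0 ⟨N - 1, by omega⟩
  have hzs : ∀ ℓ, z ℓ s = z0 ℓ * (A ^ (M ^ s - 1) * Z ^ (∑ k ∈ range s, M ^ k)) := fun ℓ => by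
    rw [hz, mul_assoc]
  rw [hz, mul_assoc, pow_pow_succ_sub_one_mul_pow_geom_sum]
  simp only [hzs]
  rw [sum_antidiagonalTuple_mul_prod_pow_mul, ← hconstraint]
  ring
end

section
/- Let c_{n,m} ∈ ℂ be given for n ∈ {1,2} and m ∈ {0,1,2,3,4}, and consider the system z_n(s+1) = ∑_{m=0}^{4} c_{n,m} [z_1(s)]^{4−m} [z_2(s)]^{m}, n = 1,2. Suppose z_1(0) ≠ 0, z_2(0) ≠ 0, set r := z_1(0)/z_2(0), and suppose Z ∈ ℂ satisfies the two constraints Z = r^{−1} ∑_{m=0}^{4} c_{1,m} r^{4−m} and Z = ∑_{m=0}^{4} c_{2,m} r^{4−m}. Then z_n(s) := z_n(0) · [z_2(0)]^{4^s − 1} · Z^{(4^s − 1)/3} (with integer exponent (4^s − 1)/3 = ∑_{k=0}^{s−1} 4^k) satisfies the system for all s ∈ ℕ and n = 1,2. -/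
/-!
The orbit of the initial point stays on the line through it. Since the right-hand side is
homogeneous of degree `4`, the ansatz `z(s) = λ(s) z(0)` reduces the system to the scalar
recursion `λ(s+1) = μ λ(s)⁴`, provided `z(0)` is an eigenvector of the quartic map with
eigenvalue `μ`; the two constraints on `Z` say exactly this with `μ = z₂(0)³ Z`. The stated
formula is the explicit solution of that scalar recursion with `λ(0) = 1`.
-/

open Finset

section BinaryForm

variable {R : Type*} [CommSemiring R]

def binaryForm (c : ℕ → R) (M : ℕ) (x y : R) : R :=
  ∑ m ∈ range (M + 1), c m * x ^ (M - m) * y ^ m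

theorem binaryForm_mul_mul (c : ℕ → R) (M : ℕ) (x y t : R) :
    binaryForm c M (x * t) (y * t) = t ^ M * binaryForm c M x y := by
  rw [binaryForm, binaryForm, mul_sum]
  refine sum_congr rfl fun m hm => ?_
  obtain ⟨k, rfl⟩ := Nat.exists_eq_add_of_le (Nat.lt_succ_iff.mp (mem_range.mp hm))
  rw [Nat.add_sub_cancel_left]
  ring

theorem binaryForm_system_of_eigenvector (c : Fin 2 → ℕ → R) (M : ℕ) (v : Fin 2 → R)
    (μ : R) (hv : ∀ n, binaryForm (c n) M (v 0) (v 1) = μ * v n)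
    (scale : ℕ → R) (hscale : ∀ s, scale (s + 1) = μ * scale s ^ M)
    (z : Fin 2 → ℕ → R) (hz : ∀ n s, z n s = v n * scale s) (n : Fin 2) (s : ℕ) :
    z n (s + 1) = binaryForm (c n) M (z 0 s) (z 1 s) := by
  rw [hz, hz, hz, binaryForm_mul_mul, hv, hscale]
  ring

end BinaryForm

theorem pow_sub_one_succ_eq (M s : ℕ) : M ^ (s + 1) - 1 = M - 1 + M * (M ^ s - 1) := by
  rcases M.eq_zero_or_pos with rfl | hM
  · simp
  · have : 1 ≤ M ^ s := Nat.one_le_pow _ _ hM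
    rw [Nat.mul_sub, pow_succ', mul_one]
    have : M ≤ M * M ^ s := Nat.le_mul_of_pos_right M this
    omega

theorem pow_geom_exponents_succ {R : Type*} [CommMonoid R] (a Z : R) (M s : ℕ) :
    a ^ (M ^ (s + 1) - 1) * Z ^ (∑ k ∈ range (s + 1), M ^ k) =
      a ^ (M - 1) * Z * (a ^ (M ^ s - 1) * Z ^ (∑ k ∈ range s, M ^ k)) ^ M := by
  rw [pow_sub_one_succ_eq, geom_sum_succ, pow_add, pow_add, pow_mul', pow_mul', pow_one,
    mul_pow]
  ac_rfl

/-- The case `N = 2`, `M = 4`: given coefficients `c n m`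
(`n : Fin 2`, `m ∈ {0,...,4}`), nonzero initial data `z0 0, z0 1`, the ratio
`r = z0 0 / z0 1`, and `Z` satisfying the two constraints
`Z = r⁻¹ ∑_{m=0}^{4} c 0 m * r^(4-m)` and `Z = ∑_{m=0}^{4} c 1 m * r^(4-m)`, the
functions `z n s = z0 n * (z0 1)^(4^s - 1) * Z^(∑_{k<s} 4^k)` satisfy the system
`z n (s+1) = ∑_{m=0}^{4} c n m * (z 0 s)^(4-m) * (z 1 s)^m`. -/
theorem solvable_system_N2_M4
    (c : Fin 2 → ℕ → ℂ)
    (z0 : Fin 2 → ℂ) (h1 : z0 0 ≠ 0) (h2 : z0 1 ≠ 0)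
    (r : ℂ) (hr : r = z0 0 / z0 1)
    (Z : ℂ)
    (hc1 : Z = r⁻¹ * ∑ m ∈ Finset.range 5, c 0 m * r ^ (4 - m))
    (hc2 : Z = ∑ m ∈ Finset.range 5, c 1 m * r ^ (4 - m))
    (z : Fin 2 → ℕ → ℂ)
    (hz : ∀ (n : Fin 2) (s : ℕ),
      z n s = z0 n * (z0 1) ^ (4 ^ s - 1) * Z ^ (∑ k ∈ Finset.range s, 4 ^ k)) :
    ∀ (n : Fin 2) (s : ℕ),
      z n (s + 1) =
        ∑ m ∈ Finset.range 5, c n m * (z 0 s) ^ (4 - m) * (z 1 s) ^ m := by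
  have hz0 : z0 0 = r * z0 1 := by rw [hr, div_mul_cancel₀ _ h2]
  have hr0 : r ≠ 0 := hr ▸ div_ne_zero h1 h2
  have hform : ∀ n, binaryForm (c n) 4 (z0 0) (z0 1) =
      z0 1 ^ 4 * ∑ m ∈ range 5, c n m * r ^ (4 - m) := by
    intro n
    calc binaryForm (c n) 4 (z0 0) (z0 1) = binaryForm (c n) 4 (r * z0 1) (1 * z0 1) := by
          rw [hz0, one_mul]
      _ = _ := by rw [binaryForm_mul_mul]; simp only [binaryForm, one_pow, mul_one]
  have heigen : ∀ n, binaryForm (c n) 4 (z0 0) (z0 1) = z0 1 ^ 3 * Z * z0 n := by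
    refine Fin.forall_fin_two.mpr ⟨?_, ?_⟩
    · rw [hform, ← mul_inv_cancel_left₀ hr0 (∑ m ∈ range 5, c 0 m * r ^ (4 - m)), ← hc1,
        hz0]
      ring
    · rw [hform, ← hc2]
      ring
  intro n s
  exact binaryForm_system_of_eigenvector c 4 z0 _ heigen _
    (pow_geom_exponents_succ (z0 1) Z 4) z (fun n s => by rw [hz, mul_assoc]) n s
end
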